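/- arXiv:2002.02584 — 3 statements merged into one kernel-verified Lean document; each statement's English description precedes it below -/
import Mathlib

section
/- Suppose P is V-uniformly ergodic, g ∈ L∞^V, and additionally g² ∈ L∞^V. Then the solution ĝ(z) := ∑_{n=0}^∞ (Pⁿ(g − π(g)))(z) of Poisson's equation satisfies ĝ² ∈ L∞^V, i.e. sup_{z ∈ Z} ĝ(z)²/V(z) < ∞. -/
open MeasureTheory ProbabilityTheory Filter Matrix

noncomputable section

attribute [local instance] Matrix.normedAddCommGroup

/-- One-step transition operator of a Markov kernel acting on real-valued functions:
`(Pop P g)(z) = ∫ g(y) P(z, dy)`. -/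
def Pop {Z : Type*} [MeasurableSpace Z] (P : Kernel Z Z) (g : Z → ℝ) (z : Z) : ℝ :=
  ∫ y, g y ∂(P z)

/-- `n`-step transition operator `Pⁿ`. -/
def Pn {Z : Type*} [MeasurableSpace Z] (P : Kernel Z Z) : ℕ → (Z → ℝ) → Z → ℝ
  | 0 => fun g => g
  | n + 1 => fun g => Pop P (Pn P n g)

/-- `g ∈ L∞^V` : `|g|` is bounded by a constant multiple of `V`. -/
def BddV {Z : Type*} (V g : Z → ℝ) : Prop :=
  ∃ C : ℝ, ∀ z, |g z| ≤ C * V z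

/-- `V`-uniform ergodicity of the kernel `P` with invariant probability measure `π`:
there are `ρ ∈ (0,1)` and `B < ∞` such that `|Pⁿg(z) − π(g)| ≤ B ‖g‖_V ρⁿ V(z)`. -/
def VUniformlyErgodic {Z : Type*} [MeasurableSpace Z] (P : Kernel Z Z) (π : Measure Z)
    (V : Z → ℝ) : Prop :=
  ∃ ρ B : ℝ, ρ ∈ Set.Ioo (0 : ℝ) 1 ∧ 0 ≤ B ∧
    ∀ (g : Z → ℝ) (C : ℝ), Measurable g → (∀ z, |g z| ≤ C * V z) →
      ∀ (n : ℕ) (z : Z), |Pn P n g z - ∫ x, g x ∂π| ≤ B * C * ρ ^ n * V z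

/-- Cross-moment matrix `E[X Yᵀ]`. -/
def crossMat {Ω : Type*} [MeasurableSpace Ω] (μ : Measure Ω) {d : ℕ}
    (X Y : Ω → Fin d → ℝ) : Matrix (Fin d) (Fin d) ℝ :=
  Matrix.of fun i j => ∫ ω, X ω i * Y ω j ∂μ

/-- Covariance-type matrix `E[X Xᵀ]`. -/
def covMat {Ω : Type*} [MeasurableSpace Ω] (μ : Measure Ω) {d : ℕ}
    (X : Ω → Fin d → ℝ) : Matrix (Fin d) (Fin d) ℝ :=
  crossMat μ X X

/-- `∫∫ (g(z') − Pg(z)) (h(z') − Ph(z))ᵀ P(z, dz') π(dz)`. -/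
def steadyCross {Z : Type*} [MeasurableSpace Z] (P : Kernel Z Z) (π : Measure Z) {d : ℕ}
    (g h : Z → Fin d → ℝ) : Matrix (Fin d) (Fin d) ℝ :=
  Matrix.of fun i j =>
    ∫ z, ∫ z', (g z' i - Pop P (fun y => g y i) z) * (h z' j - Pop P (fun y => h y j) z)
      ∂(P z) ∂π

/-- The asymptotic covariance matrix
`Σ_Δ = ∫∫ (f̂(z') − Pf̂(z))(f̂(z') − Pf̂(z))ᵀ P(z, dz') π(dz)`. -/
def SigmaDelta {Z : Type*} [MeasurableSpace Z] (P : Kernel Z Z) (π : Measure Z) {d : ℕ}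
    (fhat : Z → Fin d → ℝ) : Matrix (Fin d) (Fin d) ℝ :=
  steadyCross P π fhat fhat

/-- `E_π[Δ^m Ẑᵀ] = ∫∫ (f̂(z') − Pf̂(z)) f̂̂(z')ᵀ P(z, dz') π(dz)`. -/
def martCrossZ {Z : Type*} [MeasurableSpace Z] (P : Kernel Z Z) (π : Measure Z) {d : ℕ}
    (fhat fhh : Z → Fin d → ℝ) : Matrix (Fin d) (Fin d) ℝ :=
  Matrix.of fun i j =>
    ∫ z, ∫ z', (fhat z' i - Pop P (fun y => fhat y i) z) * fhh z' j ∂(P z) ∂π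

/-- All eigenvalues (over `ℂ`) of the real matrix `A` have real part `< c`. -/
def EigReLT {d : ℕ} (A : Matrix (Fin d) (Fin d) ℝ) (c : ℝ) : Prop :=
  ∀ (l : ℂ) (v : Fin d → ℂ), v ≠ 0 → (A.map Complex.ofReal).mulVec v = l • v → l.re < c

/-- A real square matrix is Hurwitz if all of its eigenvalues have negative real part. -/
def IsHurwitz {d : ℕ} (A : Matrix (Fin d) (Fin d) ℝ) : Prop :=
  EigReLT A 0

/-!
Write `ḡ = g - π(g)`. Uniform ergodicity applied to `ḡ` gives `|Pⁿḡ| ≤ B C₁ ρⁿ V`; applied to `ḡ²`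
and combined with Jensen's inequality `(Pⁿḡ)² ≤ Pⁿ(ḡ²)` it gives `(Pⁿḡ)² ≤ π(ḡ²) + B C₂ ρⁿ V`.
Since `min (x², a) ≤ x √a`, the two bounds merge into `(Pⁿḡ)² ≤ K ρⁿ V`, so `|Pⁿḡ| ≤ √(K V) (√ρ)ⁿ`
and summing the geometric series gives `ĝ² ≤ K V / (1 - √ρ)²`. Jensen needs `V` to be
`P(z, ·)`-integrable, which follows from the ergodicity bound applied to the truncations
`min V k`.
-/

section BddV

variable {Z : Type*} {V f g : Z → ℝ}

theorem BddV.exists_nonneg (hf : BddV V f) (hV : ∀ z, 0 ≤ V z) :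
    ∃ C, 0 ≤ C ∧ ∀ z, |f z| ≤ C * V z := by
  obtain ⟨C, hC⟩ := hf
  exact ⟨max C 0, le_max_right _ _, fun z =>
    (hC z).trans (mul_le_mul_of_nonneg_right (le_max_left _ _) (hV z))⟩

theorem BddV.mono (hg : BddV V g) (hfg : ∀ z, |f z| ≤ |g z|) : BddV V f := by
  obtain ⟨C, hC⟩ := hg
  exact ⟨C, fun z => (hfg z).trans (hC z)⟩

theorem bddV_const (hV : ∀ z, 1 ≤ V z) (c : ℝ) : BddV V fun _ => c :=
  ⟨|c|, fun z => le_mul_of_one_le_right (abs_nonneg c) (hV z)⟩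

theorem BddV.add (hf : BddV V f) (hg : BddV V g) : BddV V fun z => f z + g z := by
  obtain ⟨C, hC⟩ := hf
  obtain ⟨D, hD⟩ := hg
  exact ⟨C + D, fun z => (abs_add_le _ _).trans (by linarith [hC z, hD z])⟩

theorem BddV.const_mul (hf : BddV V f) (c : ℝ) : BddV V fun z => c * f z := by
  obtain ⟨C, hC⟩ := hf
  refine ⟨|c| * C, fun z => ?_⟩
  rw [abs_mul, mul_assoc]
  exact mul_le_mul_of_nonneg_left (hC z) (abs_nonneg c)

theorem BddV.integrable [MeasurableSpace Z] {μ : Measure Z} (hf : BddV V f)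
    (hfm : AEStronglyMeasurable f μ) (hV : Integrable V μ) : Integrable f μ := by
  obtain ⟨C, hC⟩ := hf
  exact (hV.const_mul C).mono' hfm (ae_of_all _ hC)

end BddV

theorem sq_integral_le_integral_sq {Ω : Type*} [MeasurableSpace Ω] {μ : Measure Ω}
    [IsProbabilityMeasure μ] {f : Ω → ℝ} (hf : MemLp f 2 μ) :
    (∫ x, f x ∂μ) ^ 2 ≤ ∫ x, f x ^ 2 ∂μ := by
  have := variance_nonneg f μ
  rw [variance_eq_sub hf] at this
  simpa [sub_nonneg] using this

theorem integral_sub_integral_eq_zero {Ω : Type*} [MeasurableSpace Ω] {μ : Measure Ω}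
    [IsProbabilityMeasure μ] (f : Ω → ℝ) : ∫ x, (f x - ∫ y, f y ∂μ) ∂μ = 0 := by
  by_cases hf : Integrable f μ
  · simp [integral_sub hf (integrable_const _)]
  · simp [integral_undef hf]

theorem integrable_of_forall_integral_min_le {α : Type*} [MeasurableSpace α] {μ : Measure α}
    [IsFiniteMeasure μ] {f : α → ℝ} (hfm : Measurable f) (hf0 : ∀ x, 0 ≤ f x) {M : ℝ}
    (hM : ∀ k : ℕ, ∫ x, min (f x) k ∂μ ≤ M) : Integrable f μ := by
  have hmin_m : ∀ k : ℕ, Measurable fun x => min (f x) k := fun k => hfm.min measurable_const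
  have hmin_0 : ∀ (k : ℕ) x, 0 ≤ min (f x) k := fun k x => le_min (hf0 x) k.cast_nonneg
  have hsup : ∀ x, ⨆ k : ℕ, ENNReal.ofReal (min (f x) k) = ENNReal.ofReal (f x) := fun x =>
    le_antisymm (iSup_le fun k => ENNReal.ofReal_le_ofReal (min_le_left _ _))
      (le_iSup_of_le ⌈f x⌉₊ (by rw [min_eq_left (Nat.le_ceil (f x))]))
  have hlint : ∫⁻ x, ENNReal.ofReal (f x) ∂μ ≤ ENNReal.ofReal M := by
    simp_rw [← hsup]
    rw [lintegral_iSup (fun k => (hmin_m k).ennreal_ofReal)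
      (fun k l hkl x => ENNReal.ofReal_le_ofReal (min_le_min le_rfl (Nat.cast_le.2 hkl)))]
    refine iSup_le fun k => ?_
    have hint : Integrable (fun x => min (f x) k) μ :=
      (integrable_const (k : ℝ)).mono' (hmin_m k).aestronglyMeasurable (ae_of_all _ fun x => by
        rw [Real.norm_eq_abs, abs_of_nonneg (hmin_0 k x)]
        exact min_le_right _ _)
    rw [← ofReal_integral_eq_lintegral_ofReal hint (ae_of_all _ (hmin_0 k))]
    exact ENNReal.ofReal_le_ofReal (hM k)
  refine ⟨hfm.aestronglyMeasurable, ?_⟩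
  rw [hasFiniteIntegral_iff_ofReal (ae_of_all _ hf0)]
  exact hlint.trans_lt ENNReal.ofReal_lt_top

theorem sq_le_mul_sqrt_add {u x a y : ℝ} (hux : |u| ≤ x) (hu : u ^ 2 ≤ a + y)
    (ha : 0 ≤ a) (hy : 0 ≤ y) : u ^ 2 ≤ x * √a + y := by
  have hx : 0 ≤ x := (abs_nonneg u).trans hux
  rcases le_total x √a with hxa | hax
  · calc u ^ 2 = |u| ^ 2 := (sq_abs u).symm
      _ ≤ x * x := by rw [sq]; exact mul_le_mul hux hux (abs_nonneg u) hx
      _ ≤ x * √a + y := by nlinarith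
  · calc u ^ 2 ≤ √a * √a + y := by rwa [Real.mul_self_sqrt ha]
      _ ≤ x * √a + y := by gcongr

theorem sq_tsum_le_of_sq_le_geometric {u : ℕ → ℝ} {c ρ : ℝ} (hc : 0 ≤ c) (hρ0 : 0 ≤ ρ)
    (hρ1 : ρ < 1) (hu : ∀ n, u n ^ 2 ≤ c * ρ ^ n) :
    (∑' n, u n) ^ 2 ≤ c / (1 - √ρ) ^ 2 := by
  have hr1 : √ρ < 1 := (Real.sqrt_lt' one_pos).2 (by rwa [one_pow])
  have habs : ∀ n, ‖u n‖ ≤ √c * √ρ ^ n := fun n => by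
    refine abs_le_of_sq_le_sq ?_ (by positivity)
    rw [mul_pow, ← pow_mul, mul_comm n, pow_mul, Real.sq_sqrt hc, Real.sq_sqrt hρ0]
    exact hu n
  have hsum := tsum_of_norm_bounded
    ((hasSum_geometric_of_lt_one (Real.sqrt_nonneg ρ) hr1).mul_left √c) habs
  rw [Real.norm_eq_abs] at hsum
  calc (∑' n, u n) ^ 2 = |∑' n, u n| ^ 2 := (sq_abs _).symm
    _ ≤ (√c * (1 - √ρ)⁻¹) ^ 2 := pow_le_pow_left₀ (abs_nonneg _) hsum 2
    _ = c / (1 - √ρ) ^ 2 := by rw [mul_pow, Real.sq_sqrt hc, inv_pow, div_eq_mul_inv]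

section Kernel

variable {Z : Type*} [MeasurableSpace Z] {P : Kernel Z Z}

theorem measurable_Pop [IsSFiniteKernel P] {g : Z → ℝ} (hg : Measurable g) :
    Measurable (Pop P g) :=
  (hg.comp measurable_snd).stronglyMeasurable.integral_kernel_prod_right'.measurable

theorem measurable_Pn [IsSFiniteKernel P] {g : Z → ℝ} (hg : Measurable g) :
    ∀ n, Measurable (Pn P n g)
  | 0 => hg
  | n + 1 => measurable_Pop (measurable_Pn hg n)

def VUniformlyErgodicWith (P : Kernel Z Z) (π : Measure Z) (V : Z → ℝ) (ρ B : ℝ) : Prop :=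
  ∀ (g : Z → ℝ) (C : ℝ), Measurable g → (∀ z, |g z| ≤ C * V z) →
    ∀ (n : ℕ) (z : Z), |Pn P n g z - ∫ x, g x ∂π| ≤ B * C * ρ ^ n * V z

variable {π : Measure Z} {V : Z → ℝ} {ρ B : ℝ}

namespace VUniformlyErgodicWith

theorem integrable [IsFiniteKernel P] (hE : VUniformlyErgodicWith P π V ρ B) (hVm : Measurable V)
    (hV0 : ∀ z, 0 ≤ V z) (z : Z) : Integrable V (P z) := by
  refine integrable_of_forall_integral_min_le (M := (1 + B + B * ρ) * V z) hVm hV0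
    fun k => ?_
  set G : Z → ℝ := fun y => min (V y) k
  have hGV : ∀ y, |G y| ≤ 1 * V y := fun y => by
    rw [abs_of_nonneg (le_min (hV0 y) k.cast_nonneg), one_mul]
    exact min_le_left _ _
  -- the bounds for `n = 0` and `n = 1` compare `∫ G ∂(P z)` with `G z` through `π(G)`
  have h0 := (abs_le.1 (hE G 1 (hVm.min measurable_const) hGV 0 z)).1
  have h1 := (abs_le.1 (hE G 1 (hVm.min measurable_const) hGV 1 z)).2
  have hGz : G z ≤ V z := min_le_left _ _
  simp only [Pn, Pop, pow_zero, pow_one, mul_one] at h0 h1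
  linarith

theorem bddV_Pn (hE : VUniformlyErgodicWith P π V ρ B) (hρ0 : 0 ≤ ρ) (hρ1 : ρ ≤ 1)
    (hB : 0 ≤ B) (hV1 : ∀ z, 1 ≤ V z) {f : Z → ℝ} (hf : Measurable f) (hfV : BddV V f)
    (n : ℕ) : BddV V (Pn P n f) := by
  obtain ⟨C, hC, hfC⟩ := hfV.exists_nonneg fun z => zero_le_one.trans (hV1 z)
  refine ⟨B * C + |∫ x, f x ∂π|, fun z => ?_⟩
  have hV0 : 0 ≤ V z := zero_le_one.trans (hV1 z)
  have hgeom : B * C * ρ ^ n * V z ≤ B * C * V z := mul_le_mul_of_nonneg_right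
    (mul_le_of_le_one_right (mul_nonneg hB hC) (pow_le_one₀ hρ0 hρ1)) hV0
  have hmean : |∫ x, f x ∂π| ≤ |∫ x, f x ∂π| * V z :=
    le_mul_of_one_le_right (abs_nonneg _) (hV1 z)
  linarith [abs_sub_abs_le_abs_sub (Pn P n f z) (∫ x, f x ∂π), hE f C hf hfC n z]

theorem sq_Pn_le_Pn_sq [IsMarkovKernel P] (hE : VUniformlyErgodicWith P π V ρ B)
    (hρ0 : 0 ≤ ρ) (hρ1 : ρ ≤ 1) (hB : 0 ≤ B) (hVm : Measurable V) (hV1 : ∀ z, 1 ≤ V z)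
    {f : Z → ℝ} (hf : Measurable f) (hf2V : BddV V fun z => f z ^ 2) (n : ℕ) (z : Z) :
    Pn P n f z ^ 2 ≤ Pn P n (fun x => f x ^ 2) z := by
  induction n generalizing z with
  | zero => exact le_rfl
  | succ n ih =>
    have hVint := hE.integrable hVm (fun y => zero_le_one.trans (hV1 y)) z
    have hFm := measurable_Pn (P := P) hf n
    have hF2V := hE.bddV_Pn hρ0 hρ1 hB hV1 (hf.pow_const 2) hf2V n
    have hF2 : Integrable (Pn P n fun x => f x ^ 2) (P z) :=
      hF2V.integrable (measurable_Pn (hf.pow_const 2) n).aestronglyMeasurable hVint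
    have hsqF : Integrable (fun y => Pn P n f y ^ 2) (P z) :=
      (hF2V.mono fun y => by
          rw [abs_of_nonneg (sq_nonneg _)]
          exact (ih y).trans (le_abs_self _)).integrable
        (hFm.pow_const 2).aestronglyMeasurable hVint
    calc Pn P (n + 1) f z ^ 2 = (∫ y, Pn P n f y ∂(P z)) ^ 2 := rfl
      _ ≤ ∫ y, Pn P n f y ^ 2 ∂(P z) := sq_integral_le_integral_sq
          ((memLp_two_iff_integrable_sq hFm.aestronglyMeasurable).2 hsqF)
      _ ≤ ∫ y, Pn P n (fun x => f x ^ 2) y ∂(P z) := integral_mono hsqF hF2 ih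
      _ = Pn P (n + 1) (fun x => f x ^ 2) z := rfl

theorem sq_Pn_le_of_integral_eq_zero [IsMarkovKernel P] (hE : VUniformlyErgodicWith P π V ρ B)
    (hρ0 : 0 ≤ ρ) (hρ1 : ρ ≤ 1) (hB : 0 ≤ B) (hVm : Measurable V) (hV1 : ∀ z, 1 ≤ V z)
    {f : Z → ℝ} (hf : Measurable f) (hfV : BddV V f) (hf2V : BddV V fun z => f z ^ 2)
    (hf0 : ∫ x, f x ∂π = 0) : ∃ K, 0 ≤ K ∧ ∀ n z, Pn P n f z ^ 2 ≤ K * V z * ρ ^ n := by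
  have hV0 : ∀ z, 0 ≤ V z := fun z => zero_le_one.trans (hV1 z)
  obtain ⟨C₁, hC₁, hfC₁⟩ := hfV.exists_nonneg hV0
  obtain ⟨C₂, hC₂, hf2C₂⟩ := hf2V.exists_nonneg hV0
  set a := ∫ x, f x ^ 2 ∂π
  refine ⟨B * C₁ * √a + B * C₂,
    add_nonneg (mul_nonneg (mul_nonneg hB hC₁) (Real.sqrt_nonneg a)) (mul_nonneg hB hC₂),
    fun n z => ?_⟩
  have hmean : |Pn P n f z| ≤ B * C₁ * ρ ^ n * V z := by
    simpa [hf0] using hE f C₁ hf hfC₁ n z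
  have hvar : Pn P n f z ^ 2 ≤ a + B * C₂ * ρ ^ n * V z :=
    (hE.sq_Pn_le_Pn_sq hρ0 hρ1 hB hVm hV1 hf hf2V n z).trans
      (by linarith [(abs_le.1 (hE _ C₂ (hf.pow_const 2) hf2C₂ n z)).2])
  calc Pn P n f z ^ 2 ≤ B * C₁ * ρ ^ n * V z * √a + B * C₂ * ρ ^ n * V z :=
        sq_le_mul_sqrt_add hmean hvar (integral_nonneg fun x => sq_nonneg _)
          (mul_nonneg (mul_nonneg (mul_nonneg hB hC₂) (pow_nonneg hρ0 n)) (hV0 z))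
    _ = (B * C₁ * √a + B * C₂) * V z * ρ ^ n := by ring

end VUniformlyErgodicWith

end Kernel

theorem stmt1_general
    {Z : Type*} [MeasurableSpace Z] (P : Kernel Z Z) [IsMarkovKernel P]
    (π : Measure Z) [IsProbabilityMeasure π]
    (V : Z → ℝ) (hVmeas : Measurable V) (hV1 : ∀ z, 1 ≤ V z)
    (herg : VUniformlyErgodic P π V) (g : Z → ℝ) (hg : Measurable g) (hgV : BddV V g)
    (hg2V : BddV V fun z => g z ^ 2) :
    BddV V fun z => (∑' n : ℕ, Pn P n (fun x => g x - ∫ x', g x' ∂π) z) ^ 2 := by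
  obtain ⟨ρ, B, ⟨hρ0, hρ1⟩, hB, hE : VUniformlyErgodicWith P π V ρ B⟩ := herg
  set c := ∫ x', g x' ∂π
  have hcenteredV : BddV V fun x => g x - c := by
    simpa only [← sub_eq_add_neg] using hgV.add (bddV_const hV1 (-c))
  have hcentered2V : BddV V fun x => (g x - c) ^ 2 := by
    convert (hg2V.add (hgV.const_mul (-2 * c))).add (bddV_const hV1 (c ^ 2)) using 2
    ring
  obtain ⟨K, hK, hbound⟩ := hE.sq_Pn_le_of_integral_eq_zero hρ0.le hρ1.le hB hVmeas hV1
    (hg.sub measurable_const) hcenteredV hcentered2V (integral_sub_integral_eq_zero g)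
  refine ⟨K / (1 - √ρ) ^ 2, fun z => ?_⟩
  rw [abs_of_nonneg (sq_nonneg _)]
  refine (sq_tsum_le_of_sq_le_geometric (mul_nonneg hK ?_) hρ0.le hρ1 (hbound · z)).trans_eq ?_
  · exact zero_le_one.trans (hV1 z)
  · ring

theorem stmt1
    {Z : Type*} [MeasurableSpace Z] (P : Kernel Z Z) [IsMarkovKernel P]
    (π : Measure Z) [IsProbabilityMeasure π]
    (hinv : π.bind (fun z => P z) = π)
    (huniq : ∀ π' : Measure Z, IsProbabilityMeasure π' → π'.bind (fun z => P z) = π' → π' = π)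
    (V : Z → ℝ) (hVmeas : Measurable V) (hV1 : ∀ z, 1 ≤ V z)
    (herg : VUniformlyErgodic P π V) (g : Z → ℝ) (hg : Measurable g) (hgV : BddV V g)
    (hg2V : BddV V fun z => g z ^ 2) :
    BddV V fun z => (∑' n : ℕ, Pn P n (fun x => g x - ∫ x', g x' ∂π) z) ^ 2 :=
  stmt1_general P π V hVmeas hV1 herg g hg hgV hg2V
end
end

section
/- Let ϱ₀ > 0 and L ≥ 0 be real numbers, set α_k = 1/k, and set K := exp( ϱ₀ + L² ∑_{k=1}^∞ α_k² ). Suppose 1 − ϱ₀ α_k + L² α_k² ≥ 0 for all k ≥ n₀. Then for every n ≥ 1 and every integer n₀ with 1 ≤ n₀ < n, ∏_{k=n₀}^{n} (1 − ϱ₀ α_k + L² α_k²) ≤ K · n₀^{ϱ₀} / (n+1)^{ϱ₀}. -/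
open MeasureTheory ProbabilityTheory Filter Matrix

noncomputable section

attribute [local instance] Matrix.normedAddCommGroup

/-! Use `x ≤ exp (x - 1)` on each factor. In the exponent, the harmonic sum over `[n₀, n]`
dominates `∫_{n₀}^{n+1} dx/x = log ((n+1)/n₀)` and the sum of `1/k²` is at most the whole series,
so the product is at most `exp (ϱ₀ + L² ∑ 1/k²) · (n₀/(n+1))^ϱ₀`. -/

open Real Finset

theorem prod_le_exp_sum_sub_one {ι : Type*} (s : Finset ι) {x : ι → ℝ}
    (hx : ∀ i ∈ s, 0 ≤ x i) : ∏ i ∈ s, x i ≤ exp (∑ i ∈ s, (x i - 1)) := by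
  rw [exp_sum]
  exact prod_le_prod hx fun i _ => by linarith [add_one_le_exp (x i - 1)]

theorem log_div_le_sum_Icc_inv {a b : ℕ} (ha : 0 < a) (hab : a ≤ b + 1) :
    log (((b : ℝ) + 1) / a) ≤ ∑ k ∈ Icc a b, (k : ℝ)⁻¹ := by
  calc log (((b : ℝ) + 1) / a) = ∫ x in (a : ℝ)..((b + 1 : ℕ) : ℝ), x⁻¹ := by
        rw [integral_inv_of_pos (by positivity) (by positivity), Nat.cast_succ]
    _ ≤ ∑ k ∈ Ico a (b + 1), (k : ℝ)⁻¹ :=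
        (inv_antitoneOn_Icc_right (by positivity)).integral_le_sum_Ico hab
    _ = ∑ k ∈ Icc a b, (k : ℝ)⁻¹ := by rw [Ico_add_one_right_eq_Icc]

theorem summable_inv_sq : Summable fun k : ℕ => ((k : ℝ)⁻¹) ^ 2 := by
  simpa only [inv_pow] using Real.summable_nat_pow_inv.mpr one_lt_two

-- The `k = 0` term vanishes because `(0 : ℝ)⁻¹ = 0`, so no index shift is needed.
theorem sum_inv_sq_le_tsum_inv_succ_sq (s : Finset ℕ) :
    ∑ k ∈ s, ((k : ℝ)⁻¹) ^ 2 ≤ ∑' k : ℕ, (((k : ℝ) + 1)⁻¹) ^ 2 := by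
  have hshift : ∑' k : ℕ, ((k : ℝ)⁻¹) ^ 2 = ∑' k : ℕ, (((k : ℝ) + 1)⁻¹) ^ 2 := by
    rw [summable_inv_sq.tsum_eq_zero_add]
    simp
  rw [← hshift]
  exact summable_inv_sq.sum_le_tsum s fun _ _ => by positivity

theorem exp_neg_mul_log_div {a b : ℝ} (ha : 0 < a) (hb : 0 < b) (r : ℝ) :
    exp (-(r * log (b / a))) = a ^ r / b ^ r := by
  rw [← div_rpow ha.le hb.le, rpow_def_of_pos (div_pos ha hb), ← inv_div, log_inv]
  ring_nf

theorem stmt16_general (ϱ0 L : ℝ) (hϱ0 : 0 < ϱ0) (K : ℝ)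
    (hK : K = Real.exp (ϱ0 + L ^ 2 * ∑' k : ℕ, (((k : ℝ) + 1)⁻¹) ^ 2)) :
    ∀ n n0 : ℕ, 1 ≤ n0 → n0 < n →
      (∀ k : ℕ, n0 ≤ k → 0 ≤ 1 - ϱ0 * (k : ℝ)⁻¹ + L ^ 2 * ((k : ℝ)⁻¹) ^ 2) →
      ∏ k ∈ Finset.Icc n0 n, (1 - ϱ0 * (k : ℝ)⁻¹ + L ^ 2 * ((k : ℝ)⁻¹) ^ 2)
        ≤ K * (n0 : ℝ) ^ ϱ0 / ((n : ℝ) + 1) ^ ϱ0 := by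
  intro n n0 hn0 hn0n hnonneg
  set S := ∑' k : ℕ, (((k : ℝ) + 1)⁻¹) ^ 2
  have hharm := log_div_le_sum_Icc_inv (b := n) hn0 (by omega)
  have hsq := sum_inv_sq_le_tsum_inv_succ_sq (Icc n0 n)
  have hexponent : ∑ k ∈ Icc n0 n, (1 - ϱ0 * (k : ℝ)⁻¹ + L ^ 2 * ((k : ℝ)⁻¹) ^ 2 - 1)
      ≤ -(ϱ0 * log (((n : ℝ) + 1) / n0)) + (ϱ0 + L ^ 2 * S) := by
    have hsplit : ∑ k ∈ Icc n0 n, (1 - ϱ0 * (k : ℝ)⁻¹ + L ^ 2 * ((k : ℝ)⁻¹) ^ 2 - 1)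
        = -(ϱ0 * ∑ k ∈ Icc n0 n, (k : ℝ)⁻¹) + L ^ 2 * ∑ k ∈ Icc n0 n, ((k : ℝ)⁻¹) ^ 2 := by
      rw [mul_sum, mul_sum, ← sum_neg_distrib, ← sum_add_distrib]
      exact sum_congr rfl fun _ _ => by ring
    rw [hsplit]
    linarith [mul_le_mul_of_nonneg_left hharm hϱ0.le, mul_le_mul_of_nonneg_left hsq (sq_nonneg L)]
  calc ∏ k ∈ Icc n0 n, (1 - ϱ0 * (k : ℝ)⁻¹ + L ^ 2 * ((k : ℝ)⁻¹) ^ 2)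
      ≤ exp (∑ k ∈ Icc n0 n, (1 - ϱ0 * (k : ℝ)⁻¹ + L ^ 2 * ((k : ℝ)⁻¹) ^ 2 - 1)) :=
        prod_le_exp_sum_sub_one _ fun k hk => hnonneg k (mem_Icc.mp hk).1
    _ ≤ exp (-(ϱ0 * log (((n : ℝ) + 1) / n0)) + (ϱ0 + L ^ 2 * S)) := exp_le_exp.mpr hexponent
    _ = K * (n0 : ℝ) ^ ϱ0 / ((n : ℝ) + 1) ^ ϱ0 := by
        rw [exp_add, exp_neg_mul_log_div (by positivity) (by positivity), hK]
        ring

theorem stmt16 (ϱ0 L : ℝ) (hϱ0 : 0 < ϱ0) (hL : 0 ≤ L) (K : ℝ)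
    (hK : K = Real.exp (ϱ0 + L ^ 2 * ∑' k : ℕ, (((k : ℝ) + 1)⁻¹) ^ 2)) :
    ∀ n n0 : ℕ, 1 ≤ n0 → n0 < n →
      (∀ k : ℕ, n0 ≤ k → 0 ≤ 1 - ϱ0 * (k : ℝ)⁻¹ + L ^ 2 * ((k : ℝ)⁻¹) ^ 2) →
      ∏ k ∈ Finset.Icc n0 n, (1 - ϱ0 * (k : ℝ)⁻¹ + L ^ 2 * ((k : ℝ)⁻¹) ^ 2)
        ≤ K * (n0 : ℝ) ^ ϱ0 / ((n : ℝ) + 1) ^ ϱ0 :=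
  stmt16_general ϱ0 L hϱ0 K hK
end
end

section
/- Let A be a real d×d matrix such that I + A is Hurwitz, and let T be the unique positive definite solution of the Lyapunov equation (A+I)ᵀ T + T (A+I) + I = 0. For w ∈ ℝ^d set ‖w‖_T := √(wᵀ T w), and for a d×d matrix M let ‖M‖_T denote the induced operator norm sup_{w ≠ 0} ‖M w‖_T / ‖w‖_T. Then there exists a constant K < ∞ such that for every integer k ≥ 1 and every integer n ≥ k, ‖ ∏_{l=k+1}^{n+1} ( I + (1/l) A ) ‖_T ≤ K · k / (n+2). -/
open MeasureTheory ProbabilityTheory Filter Matrix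

noncomputable section

attribute [local instance] Matrix.normedAddCommGroup

/-- the `T`-weighted Euclidean norm `‖w‖_T = √(wᵀ T w)` -/
def normT {d : ℕ} (T : Matrix (Fin d) (Fin d) ℝ) (w : Fin d → ℝ) : ℝ :=
  Real.sqrt (w ⬝ᵥ T.mulVec w)

/-- the matrix product `∏_{l=k+1}^{n+1} (I + (1/l) A)` (the factors commute). -/
def prodIA {d : ℕ} (A : Matrix (Fin d) (Fin d) ℝ) (k n : ℕ) : Matrix (Fin d) (Fin d) ℝ :=
  (((List.range' (k + 1) (n + 1 - k)).map
    fun l => (1 : Matrix (Fin d) (Fin d) ℝ) + ((l : ℝ))⁻¹ • A)).prod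

namespace Stmt18Aux
variable {d : ℕ} {T A : Matrix (Fin d) (Fin d) ℝ}

lemma dot_shift (A : Matrix (Fin d) (Fin d) ℝ) (x y : Fin d → ℝ) :
    (A *ᵥ x) ⬝ᵥ y = x ⬝ᵥ (Aᵀ *ᵥ y) := by
  rw [Matrix.dotProduct_mulVec, Matrix.vecMul_transpose]

lemma qnonneg (hT : T.PosDef) (x : Fin d → ℝ) : 0 ≤ x ⬝ᵥ T *ᵥ x := by
  rcases eq_or_ne x 0 with h | h
  · simp [h]
  · have := hT.re_dotProduct_pos h
    simpa using this.le

lemma qsymm (hT : T.PosDef) (x y : Fin d → ℝ) : x ⬝ᵥ T *ᵥ y = y ⬝ᵥ T *ᵥ x := by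
  have hTT : Tᵀ = T := hT.isHermitian
  calc x ⬝ᵥ T *ᵥ y = x ⬝ᵥ Tᵀ *ᵥ y := by rw [hTT]
    _ = (T *ᵥ x) ⬝ᵥ y := (dot_shift T x y).symm
    _ = y ⬝ᵥ (T *ᵥ x) := dotProduct_comm _ _

lemma expandq (T : Matrix (Fin d) (Fin d) ℝ) (v u : Fin d → ℝ) (t : ℝ) :
    (v + t • u) ⬝ᵥ T *ᵥ (v + t • u) =
      v ⬝ᵥ T *ᵥ v + t * (v ⬝ᵥ T *ᵥ u + u ⬝ᵥ T *ᵥ v) + t ^ 2 * (u ⬝ᵥ T *ᵥ u) := by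
  simp only [Matrix.mulVec_add, Matrix.mulVec_smul, dotProduct_add, add_dotProduct,
    dotProduct_smul, smul_dotProduct, smul_eq_mul]
  ring

lemma cs (hT : T.PosDef) (x y : Fin d → ℝ) :
    x ⬝ᵥ T *ᵥ y ≤ Real.sqrt (x ⬝ᵥ T *ᵥ x) * Real.sqrt (y ⬝ᵥ T *ᵥ y) := by
  set B := x ⬝ᵥ T *ᵥ y with hB
  have key : ∀ t : ℝ, 0 ≤ (y ⬝ᵥ T *ᵥ y) * (t * t) + (2 * B) * t + (x ⬝ᵥ T *ᵥ x) := by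
    intro t
    have h := qnonneg hT (x + t • y)
    rw [expandq] at h
    have hs := qsymm hT x y
    calc (0:ℝ) ≤ _ := h
      _ = _ := by rw [hB, hs]; ring
  have hd := discrim_le_zero key
  rw [discrim] at hd
  have hB2 : B ^ 2 ≤ (x ⬝ᵥ T *ᵥ x) * (y ⬝ᵥ T *ᵥ y) := by nlinarith
  calc B ≤ |B| := le_abs_self B
    _ = Real.sqrt (B ^ 2) := (Real.sqrt_sq_eq_abs B).symm
    _ ≤ Real.sqrt ((x ⬝ᵥ T *ᵥ x) * (y ⬝ᵥ T *ᵥ y)) := Real.sqrt_le_sqrt hB2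
    _ = _ := Real.sqrt_mul (qnonneg hT x) _

lemma triangle (hT : T.PosDef) (x y : Fin d → ℝ) :
    Real.sqrt ((x + y) ⬝ᵥ T *ᵥ (x + y)) ≤
      Real.sqrt (x ⬝ᵥ T *ᵥ x) + Real.sqrt (y ⬝ᵥ T *ᵥ y) := by
  have h1 : (x + y) ⬝ᵥ T *ᵥ (x + y) ≤
      (Real.sqrt (x ⬝ᵥ T *ᵥ x) + Real.sqrt (y ⬝ᵥ T *ᵥ y)) ^ 2 := by
    have e : (x + y) ⬝ᵥ T *ᵥ (x + y) =
        x ⬝ᵥ T *ᵥ x + 1 * (x ⬝ᵥ T *ᵥ y + y ⬝ᵥ T *ᵥ x) + 1 ^ 2 * (y ⬝ᵥ T *ᵥ y) := by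
      have := expandq T x y 1
      simpa using this
    have hcs := cs hT x y
    have hs := qsymm hT x y
    have hx := Real.sq_sqrt (qnonneg hT x)
    have hy := Real.sq_sqrt (qnonneg hT y)
    nlinarith
  calc Real.sqrt ((x + y) ⬝ᵥ T *ᵥ (x + y)) ≤
      Real.sqrt ((Real.sqrt (x ⬝ᵥ T *ᵥ x) + Real.sqrt (y ⬝ᵥ T *ᵥ y)) ^ 2) :=
        Real.sqrt_le_sqrt h1
    _ = _ := by
        rw [Real.sqrt_sq (by positivity)]

lemma quad_ub (B : Matrix (Fin d) (Fin d) ℝ) :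
    ∃ C : ℝ, 0 ≤ C ∧ ∀ w : Fin d → ℝ, w ⬝ᵥ B *ᵥ w ≤ C * (w ⬝ᵥ w) := by
  refine ⟨∑ i, ∑ j, |B i j|, by positivity, fun w => ?_⟩
  have hd0 : w ⬝ᵥ w = ∑ k, w k * w k := rfl
  have hw : ∀ i j : Fin d, |w i * w j| ≤ w ⬝ᵥ w := by
    intro i j
    have hi : w i * w i ≤ w ⬝ᵥ w := by
      rw [hd0]
      exact Finset.single_le_sum (fun k _ => mul_self_nonneg (w k)) (Finset.mem_univ i)
    have hj : w j * w j ≤ w ⬝ᵥ w := by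
      rw [hd0]
      exact Finset.single_le_sum (fun k _ => mul_self_nonneg (w k)) (Finset.mem_univ j)
    rw [abs_mul]
    nlinarith [sq_nonneg (|w i| - |w j|), sq_abs (w i), sq_abs (w j), sq (a := w i), sq (a := w j)]
  calc w ⬝ᵥ B *ᵥ w = ∑ i, ∑ j, w i * (B i j * w j) := by
        simp [dotProduct, Matrix.mulVec, Finset.mul_sum]
    _ ≤ ∑ i : Fin d, ∑ j : Fin d, |B i j| * (w ⬝ᵥ w) := by
        refine Finset.sum_le_sum fun i _ => Finset.sum_le_sum fun j _ => ?_
        have h1 : w i * (B i j * w j) ≤ |B i j| * |w i * w j| := by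
          calc w i * (B i j * w j) ≤ |w i * (B i j * w j)| := le_abs_self _
            _ = |B i j| * |w i * w j| := by rw [abs_mul, abs_mul, abs_mul]; ring
        refine h1.trans ?_
        have := hw i j
        have h0 : (0:ℝ) ≤ |B i j| := abs_nonneg _
        nlinarith
    _ = (∑ i, ∑ j, |B i j|) * (w ⬝ᵥ w) := by
        rw [Finset.sum_mul]
        exact Finset.sum_congr rfl fun i _ => (Finset.sum_mul _ _ _).symm


lemma dot_self_nonneg (w : Fin d → ℝ) : 0 ≤ w ⬝ᵥ w :=
  Finset.sum_nonneg fun k _ => mul_self_nonneg (w k)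

lemma quad_lb (hT : T.PosDef) :
    ∃ C : ℝ, 0 ≤ C ∧ ∀ w : Fin d → ℝ, w ⬝ᵥ w ≤ (C + 1) * (w ⬝ᵥ T *ᵥ w) := by
  obtain ⟨C, hC0, hC⟩ := quad_ub T⁻¹
  refine ⟨C, hC0, fun w => ?_⟩
  have hinv : T * T⁻¹ = 1 := Matrix.mul_nonsing_inv T (isUnit_iff_ne_zero.mpr hT.det_pos.ne')
  have hTw : T *ᵥ (T⁻¹ *ᵥ w) = w := by
    rw [Matrix.mulVec_mulVec, hinv, Matrix.one_mulVec]
  have h1 : w ⬝ᵥ w = w ⬝ᵥ T *ᵥ (T⁻¹ *ᵥ w) := by rw [hTw]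
  set a := Real.sqrt (w ⬝ᵥ T *ᵥ w) with hadef
  set b := Real.sqrt ((T⁻¹ *ᵥ w) ⬝ᵥ T *ᵥ (T⁻¹ *ᵥ w)) with hbdef
  have ha : 0 ≤ a := Real.sqrt_nonneg _
  have hb : 0 ≤ b := Real.sqrt_nonneg _
  have haa : a * a = w ⬝ᵥ T *ᵥ w := Real.mul_self_sqrt (qnonneg hT w)
  have hbb : b * b = (T⁻¹ *ᵥ w) ⬝ᵥ T *ᵥ (T⁻¹ *ᵥ w) := Real.mul_self_sqrt (qnonneg hT _)
  have hab : w ⬝ᵥ w ≤ a * b := h1.trans_le (cs hT w (T⁻¹ *ᵥ w))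
  have hb2 : b * b ≤ C * (w ⬝ᵥ w) := by
    rw [hbb]
    calc (T⁻¹ *ᵥ w) ⬝ᵥ T *ᵥ (T⁻¹ *ᵥ w) = (T⁻¹ *ᵥ w) ⬝ᵥ w := by rw [hTw]
      _ = w ⬝ᵥ T⁻¹ *ᵥ w := dotProduct_comm _ _
      _ ≤ C * (w ⬝ᵥ w) := hC w
  rcases eq_or_lt_of_le (dot_self_nonneg w) with h0 | h0
  · rw [← h0]
    have := qnonneg hT w
    nlinarith
  · rw [← haa]
    nlinarith [mul_le_mul hab hab h0.le (mul_nonneg ha hb),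
      mul_le_mul_of_nonneg_left hb2 (mul_nonneg ha ha)]


lemma list_coe_map {M : Type*} (f : ℝ → M) : ∀ l : List ℕ,
    List.map f (do let a ← l; pure ((a : ℕ) : ℝ)) = List.map (fun a : ℕ => f a) l := by
  intro l
  induction l with
  | nil => rfl
  | cons a t ih => simp_all [List.flatMap_cons]

lemma lyap_id (hLyap : (A + 1)ᵀ * T + T * (A + 1) + 1 = 0) :
    Aᵀ * T + T * A = -1 - (2:ℝ) • T := by
  have h := hLyap
  rw [Matrix.transpose_add, Matrix.transpose_one, Matrix.add_mul, Matrix.mul_add,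
    Matrix.one_mul, Matrix.mul_one] at h
  rw [two_smul]
  rw [eq_sub_iff_add_eq, ← sub_eq_zero]
  rw [← h]
  abel

lemma cross_id (hLyap : (A + 1)ᵀ * T + T * (A + 1) + 1 = 0) (w : Fin d → ℝ) :
    w ⬝ᵥ T *ᵥ (A *ᵥ w) + (A *ᵥ w) ⬝ᵥ T *ᵥ w = -(w ⬝ᵥ w) - 2 * (w ⬝ᵥ T *ᵥ w) := by
  have h2 := lyap_id (T := T) (A := A) hLyap
  have e1 : w ⬝ᵥ T *ᵥ (A *ᵥ w) = w ⬝ᵥ (T * A) *ᵥ w := by rw [Matrix.mulVec_mulVec]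
  have e2 : (A *ᵥ w) ⬝ᵥ T *ᵥ w = w ⬝ᵥ (Aᵀ * T) *ᵥ w := by
    rw [dot_shift A w (T *ᵥ w), Matrix.mulVec_mulVec]
  rw [e1, e2, ← dotProduct_add, ← Matrix.add_mulVec]
  have e3 : T * A + Aᵀ * T = -1 - (2:ℝ) • T := by rw [add_comm, h2]
  rw [e3]
  simp only [Matrix.sub_mulVec, Matrix.neg_mulVec, Matrix.one_mulVec,
    Matrix.smul_mulVec, dotProduct_sub, dotProduct_neg, dotProduct_smul, smul_eq_mul]

lemma step_contract (hT : T.PosDef) (hLyap : (A + 1)ᵀ * T + T * (A + 1) + 1 = 0)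
    {CB : ℝ} (hCB : ∀ w : Fin d → ℝ, (A *ᵥ w) ⬝ᵥ T *ᵥ (A *ᵥ w) ≤ CB * (w ⬝ᵥ w))
    {l : ℕ} (hl : 2 ≤ l) (hCBl : CB ≤ (l : ℝ)) (w : Fin d → ℝ) :
    Real.sqrt ((((1 : Matrix (Fin d) (Fin d) ℝ) + ((l : ℝ))⁻¹ • A) *ᵥ w) ⬝ᵥ
        T *ᵥ (((1 : Matrix (Fin d) (Fin d) ℝ) + ((l : ℝ))⁻¹ • A) *ᵥ w)) ≤
      (1 - (l : ℝ)⁻¹) * Real.sqrt (w ⬝ᵥ T *ᵥ w) := by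
  have hl0 : (0:ℝ) < (l:ℝ) := by
    have : (0:ℕ) < l := by omega
    exact_mod_cast this
  set c : ℝ := ((l : ℝ))⁻¹ with hc
  have hc0 : 0 < c := by positivity
  have hc1 : c ≤ 1 := by
    rw [hc]
    apply inv_le_one_of_one_le₀
    exact_mod_cast (by omega : 1 ≤ l)
  have hfw : ((1 : Matrix (Fin d) (Fin d) ℝ) + c • A) *ᵥ w = w + c • (A *ᵥ w) := by
    rw [Matrix.add_mulVec, Matrix.one_mulVec, Matrix.smul_mulVec]
  have hQ : (((1 : Matrix (Fin d) (Fin d) ℝ) + c • A) *ᵥ w) ⬝ᵥ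
      T *ᵥ (((1 : Matrix (Fin d) (Fin d) ℝ) + c • A) *ᵥ w) ≤
      (1 - c) ^ 2 * (w ⬝ᵥ T *ᵥ w) := by
    rw [hfw, expandq, cross_id hLyap]
    have hQA := hCB w
    have hww := dot_self_nonneg w
    have hQw := qnonneg hT w
    have hcCB : c * CB ≤ 1 := by
      have h1 : c * CB ≤ c * (l:ℝ) := by
        apply mul_le_mul_of_nonneg_left hCBl hc0.le
      rw [hc] at h1 ⊢
      rwa [inv_mul_cancel₀ hl0.ne'] at h1
    nlinarith [mul_le_mul_of_nonneg_left hQA (mul_pos hc0 hc0).le,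
      mul_nonneg (mul_nonneg hc0.le hww) (sub_nonneg.mpr hcCB)]
  have h1c : 0 ≤ 1 - c := by linarith
  calc Real.sqrt _ ≤ Real.sqrt ((1 - c) ^ 2 * (w ⬝ᵥ T *ᵥ w)) := Real.sqrt_le_sqrt hQ
    _ = (1 - c) * Real.sqrt (w ⬝ᵥ T *ᵥ w) := by
        rw [Real.sqrt_mul (sq_nonneg _), Real.sqrt_sq h1c]

lemma step_crude (hT : T.PosDef)
    {CD : ℝ} (hCD0 : 0 ≤ CD)
    (hCD : ∀ w : Fin d → ℝ, (A *ᵥ w) ⬝ᵥ T *ᵥ (A *ᵥ w) ≤ CD * (w ⬝ᵥ T *ᵥ w))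
    {l : ℕ} (hl : 1 ≤ l) (w : Fin d → ℝ) :
    Real.sqrt ((((1 : Matrix (Fin d) (Fin d) ℝ) + ((l : ℝ))⁻¹ • A) *ᵥ w) ⬝ᵥ
        T *ᵥ (((1 : Matrix (Fin d) (Fin d) ℝ) + ((l : ℝ))⁻¹ • A) *ᵥ w)) ≤
      (1 + Real.sqrt CD) * Real.sqrt (w ⬝ᵥ T *ᵥ w) := by
  have hl0 : (0:ℝ) < (l:ℝ) := by
    have : (0:ℕ) < l := by omega
    exact_mod_cast this
  set c : ℝ := ((l : ℝ))⁻¹ with hc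
  have hc0 : 0 < c := by positivity
  have hc1 : c ≤ 1 := by
    rw [hc]
    apply inv_le_one_of_one_le₀
    exact_mod_cast hl
  have hfw : ((1 : Matrix (Fin d) (Fin d) ℝ) + c • A) *ᵥ w = w + c • (A *ᵥ w) := by
    rw [Matrix.add_mulVec, Matrix.one_mulVec, Matrix.smul_mulVec]
  rw [hfw]
  have htri := triangle hT w (c • (A *ᵥ w))
  refine htri.trans ?_
  have hsm : Real.sqrt ((c • (A *ᵥ w)) ⬝ᵥ T *ᵥ (c • (A *ᵥ w))) =
      c * Real.sqrt ((A *ᵥ w) ⬝ᵥ T *ᵥ (A *ᵥ w)) := by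
    have e : (c • (A *ᵥ w)) ⬝ᵥ T *ᵥ (c • (A *ᵥ w)) =
        c ^ 2 * ((A *ᵥ w) ⬝ᵥ T *ᵥ (A *ᵥ w)) := by
      simp only [Matrix.mulVec_smul, smul_dotProduct, dotProduct_smul, smul_eq_mul]
      ring
    rw [e, Real.sqrt_mul (sq_nonneg _), Real.sqrt_sq hc0.le]
  rw [hsm]
  have hAw : Real.sqrt ((A *ᵥ w) ⬝ᵥ T *ᵥ (A *ᵥ w)) ≤
      Real.sqrt CD * Real.sqrt (w ⬝ᵥ T *ᵥ w) := by
    rw [← Real.sqrt_mul hCD0]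
    exact Real.sqrt_le_sqrt (hCD w)
  have h0 : 0 ≤ Real.sqrt (w ⬝ᵥ T *ᵥ w) := Real.sqrt_nonneg _
  have h1 : 0 ≤ Real.sqrt CD := Real.sqrt_nonneg _
  nlinarith [Real.sqrt_nonneg ((A *ᵥ w) ⬝ᵥ T *ᵥ (A *ᵥ w))]


lemma main_induction (hT : T.PosDef) (hLyap : (A + 1)ᵀ * T + T * (A + 1) + 1 = 0)
    {CB CD : ℝ} (hCB : ∀ w : Fin d → ℝ, (A *ᵥ w) ⬝ᵥ T *ᵥ (A *ᵥ w) ≤ CB * (w ⬝ᵥ w))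
    (hCD0 : 0 ≤ CD)
    (hCD : ∀ w : Fin d → ℝ, (A *ᵥ w) ⬝ᵥ T *ᵥ (A *ᵥ w) ≤ CD * (w ⬝ᵥ T *ᵥ w))
    {L : ℕ} (hL2 : 2 ≤ L) (hLCB : CB ≤ (L : ℝ)) :
    ∀ cnt s : ℕ, 2 ≤ s → ∀ w : Fin d → ℝ,
      Real.sqrt ((((List.range' s cnt).map
          (fun l : ℕ => (1 : Matrix (Fin d) (Fin d) ℝ) + ((l : ℝ))⁻¹ • A)).prod *ᵥ w) ⬝ᵥ
        T *ᵥ (((List.range' s cnt).map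
          (fun l : ℕ => (1 : Matrix (Fin d) (Fin d) ℝ) + ((l : ℝ))⁻¹ • A)).prod *ᵥ w)) ≤
      ((1 + Real.sqrt CD) * L) ^ (L - s) * (((s : ℝ) - 1) / ((s : ℝ) + (cnt : ℝ) - 1)) *
        Real.sqrt (w ⬝ᵥ T *ᵥ w) := by
  set C0 : ℝ := 1 + Real.sqrt CD with hC0def
  have hC0 : 1 ≤ C0 := by
    have := Real.sqrt_nonneg CD
    simp only [hC0def]
    linarith
  have hLR : (1:ℝ) ≤ (L:ℝ) := by exact_mod_cast (by omega : 1 ≤ L)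
  have hC1 : 1 ≤ C0 * L := one_le_mul_of_one_le_of_one_le hC0 hLR
  intro cnt
  induction cnt with
  | zero =>
    intro s hs w
    simp only [List.range'_zero, List.map_nil, List.prod_nil, Matrix.one_mulVec]
    have hsR : (1:ℝ) ≤ (s:ℝ) - 1 := by
      have : (2:ℝ) ≤ (s:ℝ) := by exact_mod_cast hs
      linarith
    have hden : ((s : ℝ) + (0:ℕ) - 1) = (s:ℝ) - 1 := by push_cast; ring
    rw [hden, div_self (by linarith)]
    have hpow : (1:ℝ) ≤ (C0 * L) ^ (L - s) := one_le_pow₀ hC1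
    nlinarith [Real.sqrt_nonneg (w ⬝ᵥ T *ᵥ w)]
  | succ cnt ih =>
    intro s hs w
    rw [List.range'_succ, List.map_cons, List.prod_cons, ← Matrix.mulVec_mulVec]
    set P := ((List.range' (s+1) cnt).map
        (fun l : ℕ => (1 : Matrix (Fin d) (Fin d) ℝ) + ((l : ℝ))⁻¹ • A)).prod with hP
    set v := P *ᵥ w with hv
    have ihv := ih (s+1) (by omega) w
    have hcast1 : ((s+1:ℕ) : ℝ) - 1 = (s:ℝ) := by push_cast; ring
    have hcast2 : ((s+1:ℕ) : ℝ) + (cnt:ℝ) - 1 = (s:ℝ) + cnt := by push_cast; ring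
    rw [hcast1, hcast2] at ihv
    have hgoalden : (s : ℝ) + ((cnt+1:ℕ) : ℝ) - 1 = (s:ℝ) + cnt := by push_cast; ring
    rw [hgoalden]
    have hspos : (0:ℝ) < (s:ℝ) := by
      have : (0:ℕ) < s := by omega
      exact_mod_cast this
    have hdenpos : (0:ℝ) < (s:ℝ) + cnt := by positivity
    have hs2 : (2:ℝ) ≤ (s:ℝ) := by exact_mod_cast hs
    have hsqv : 0 ≤ Real.sqrt (v ⬝ᵥ T *ᵥ v) := Real.sqrt_nonneg _
    have hsqw : 0 ≤ Real.sqrt (w ⬝ᵥ T *ᵥ w) := Real.sqrt_nonneg _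
    by_cases hcase : L ≤ s
    · -- contraction step
      have hstep := step_contract hT hLyap hCB (l := s) hs
        (hLCB.trans (by exact_mod_cast hcase)) v
      have hLs : L - s = 0 := by omega
      have hLs1 : L - (s+1) = 0 := by omega
      rw [hLs1] at ihv
      rw [hLs]
      simp only [pow_zero, one_mul] at ihv ⊢
      have hfac : 0 ≤ 1 - ((s:ℝ))⁻¹ := by
        have : ((s:ℝ))⁻¹ ≤ 1 := by
          apply inv_le_one_of_one_le₀
          linarith [hs2]
        linarith
      calc Real.sqrt _ ≤ (1 - ((s:ℝ))⁻¹) * Real.sqrt (v ⬝ᵥ T *ᵥ v) := hstep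
        _ ≤ (1 - ((s:ℝ))⁻¹) * ((s:ℝ) / ((s:ℝ) + cnt) * Real.sqrt (w ⬝ᵥ T *ᵥ w)) := by
            apply mul_le_mul_of_nonneg_left ihv hfac
        _ = (((s:ℝ) - 1) / ((s:ℝ) + cnt)) * Real.sqrt (w ⬝ᵥ T *ᵥ w) := by
            field_simp
    · -- crude step
      push_neg at hcase
      have hstep := step_crude hT hCD0 hCD (l := s) (by omega) v
      have hLs : L - s = (L - (s+1)) + 1 := by omega
      calc Real.sqrt _ ≤ C0 * Real.sqrt (v ⬝ᵥ T *ᵥ v) := hstep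
        _ ≤ C0 * ((C0 * L) ^ (L - (s+1)) * ((s:ℝ) / ((s:ℝ) + cnt)) *
              Real.sqrt (w ⬝ᵥ T *ᵥ w)) := by
            apply mul_le_mul_of_nonneg_left ihv (by linarith)
        _ ≤ (C0 * L) ^ (L - s) * (((s:ℝ) - 1) / ((s:ℝ) + cnt)) *
              Real.sqrt (w ⬝ᵥ T *ᵥ w) := by
            rw [hLs, pow_succ]
            have hpow0 : (0:ℝ) ≤ (C0 * L) ^ (L - (s+1)) := by positivity
            have hL2R : (2:ℝ) ≤ (L:ℝ) := by exact_mod_cast hL2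
            have hprod : (1:ℝ) * (1:ℝ) ≤ ((L:ℝ) - 1) * ((s:ℝ) - 1) :=
              mul_le_mul (by linarith) (by linarith) (by linarith) (by linarith)
            have h9 : C0 * (s:ℝ) ≤ (C0 * L) * ((s:ℝ) - 1) := by nlinarith [hprod, hC0]
            have hkey : C0 * ((s:ℝ) / ((s:ℝ) + cnt)) ≤
                (C0 * (L:ℝ)) * (((s:ℝ) - 1) / ((s:ℝ) + cnt)) := by
              rw [mul_div_assoc', mul_div_assoc']
              exact div_le_div_of_nonneg_right h9 hdenpos.le
            nlinarith [mul_le_mul_of_nonneg_right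
              (mul_le_mul_of_nonneg_left hkey hpow0) hsqw]
    
end Stmt18Aux



theorem stmt18 {d : ℕ} (A : Matrix (Fin d) (Fin d) ℝ)
    (hA : IsHurwitz ((1 : Matrix (Fin d) (Fin d) ℝ) + A))
    (T : Matrix (Fin d) (Fin d) ℝ) (hT : T.PosDef)
    (hLyap : (A + 1)ᵀ * T + T * (A + 1) + 1 = 0) :
    ∃ K : ℝ, ∀ k n : ℕ, 1 ≤ k → k ≤ n → ∀ w : Fin d → ℝ,
      normT T ((prodIA A k n).mulVec w) ≤ K * (k : ℝ) / ((n : ℝ) + 2) * normT T w := by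
  classical
  obtain ⟨CB, hCB0, hCBu⟩ := Stmt18Aux.quad_ub (Aᵀ * T * A)
  have hQA : ∀ w : Fin d → ℝ, (A *ᵥ w) ⬝ᵥ T *ᵥ (A *ᵥ w) ≤ CB * (w ⬝ᵥ w) := by
    intro w
    have e : (A *ᵥ w) ⬝ᵥ T *ᵥ (A *ᵥ w) = w ⬝ᵥ (Aᵀ * T * A) *ᵥ w := by
      rw [Stmt18Aux.dot_shift A w (T *ᵥ (A *ᵥ w)), Matrix.mulVec_mulVec, Matrix.mulVec_mulVec]
    rw [e]
    exact hCBu w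
  obtain ⟨Cl, hCl0, hCl⟩ := Stmt18Aux.quad_lb hT
  set CD : ℝ := CB * (Cl + 1) with hCDdef
  have hCD0 : 0 ≤ CD := by positivity
  have hCD : ∀ w : Fin d → ℝ, (A *ᵥ w) ⬝ᵥ T *ᵥ (A *ᵥ w) ≤ CD * (w ⬝ᵥ T *ᵥ w) := by
    intro w
    refine (hQA w).trans ?_
    calc CB * (w ⬝ᵥ w) ≤ CB * ((Cl + 1) * (w ⬝ᵥ T *ᵥ w)) :=
          mul_le_mul_of_nonneg_left (hCl w) hCB0
      _ = CD * (w ⬝ᵥ T *ᵥ w) := by rw [hCDdef]; ring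
  set L : ℕ := max 2 ⌈CB⌉₊ with hLdef
  have hL2 : 2 ≤ L := le_max_left _ _
  have hLCB : CB ≤ (L : ℝ) := by
    refine (Nat.le_ceil CB).trans ?_
    exact_mod_cast le_max_right 2 ⌈CB⌉₊
  set C1 : ℝ := (1 + Real.sqrt CD) * L with hC1def
  have hC1 : 1 ≤ C1 := by
    have h1 : (1:ℝ) ≤ 1 + Real.sqrt CD := by
      have := Real.sqrt_nonneg CD
      linarith
    have h2 : (1:ℝ) ≤ (L:ℝ) := by exact_mod_cast (by omega : 1 ≤ L)
    calc (1:ℝ) = 1 * 1 := by ring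
      _ ≤ (1 + Real.sqrt CD) * (L:ℝ) := mul_le_mul h1 h2 zero_le_one (by linarith)
  refine ⟨2 * C1 ^ L, ?_⟩
  intro k n hk hkn w
  have hmain := Stmt18Aux.main_induction hT hLyap hQA hCD0 hCD hL2 hLCB
    (n + 1 - k) (k + 1) (by omega) w
  have hc1 : ((k + 1 : ℕ) : ℝ) - 1 = (k : ℝ) := by push_cast; ring
  have hc2 : ((k + 1 : ℕ) : ℝ) + ((n + 1 - k : ℕ) : ℝ) - 1 = (n : ℝ) + 1 := by
    have hle : k ≤ n + 1 := by omega
    rw [Nat.cast_sub hle]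
    push_cast
    ring
  rw [hc1, hc2] at hmain
  have hnpos : (0:ℝ) < (n : ℝ) + 1 := by positivity
  have hn2pos : (0:ℝ) < (n : ℝ) + 2 := by positivity
  have hk0 : (0:ℝ) ≤ (k : ℝ) := by positivity
  have hsw : 0 ≤ Real.sqrt (w ⬝ᵥ T *ᵥ w) := Real.sqrt_nonneg _
  have hpow_le : C1 ^ (L - (k + 1)) ≤ C1 ^ L := pow_le_pow_right₀ hC1 (Nat.sub_le _ _)
  have hfrac : (k : ℝ) / ((n : ℝ) + 1) ≤ 2 * (k : ℝ) / ((n : ℝ) + 2) := by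
    rw [div_le_div_iff₀ hnpos hn2pos]
    nlinarith [mul_nonneg hk0 (Nat.cast_nonneg n : (0:ℝ) ≤ (n:ℝ))]
  have hPe : prodIA A k n = ((List.range' (k + 1) (n + 1 - k)).map
      (fun l : ℕ => (1 : Matrix (Fin d) (Fin d) ℝ) + ((l : ℝ))⁻¹ • A)).prod := by
    unfold prodIA
    rw [Stmt18Aux.list_coe_map]
  rw [show normT T ((prodIA A k n).mulVec w) = Real.sqrt (((prodIA A k n).mulVec w) ⬝ᵥ
      T *ᵥ ((prodIA A k n).mulVec w)) from rfl,
    show normT T w = Real.sqrt (w ⬝ᵥ T *ᵥ w) from rfl, hPe]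
  calc Real.sqrt _ ≤ C1 ^ (L - (k + 1)) * ((k : ℝ) / ((n : ℝ) + 1)) *
        Real.sqrt (w ⬝ᵥ T *ᵥ w) := hmain
    _ ≤ C1 ^ L * (2 * (k : ℝ) / ((n : ℝ) + 2)) * Real.sqrt (w ⬝ᵥ T *ᵥ w) := by
        apply mul_le_mul_of_nonneg_right _ hsw
        exact mul_le_mul hpow_le hfrac (by positivity) (by positivity)
    _ = 2 * C1 ^ L * (k : ℝ) / ((n : ℝ) + 2) * Real.sqrt (w ⬝ᵥ T *ᵥ w) := by ring
end
end
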